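/- arXiv:1201.3026 — 2 statements merged into one kernel-verified Lean document; each statement's English description precedes it below -/
import Mathlib

section
/- Let H be a complex Hilbert space, H₁ and H₂ closed subspaces of H, and P₁, P₂ the orthogonal projections onto H₁ and H₂. Then the following are equivalent: (1) H₁ ∩ H₂ = 0 and H₁ + H₂ is closed in H; (2) ‖P₁P₂‖ < 1. -/
/-!
Both conditions say that the sum map `H₁ × H₂ → H`, `(x, y) ↦ x + y`, is bounded below. By the
open mapping theorem, (1) holds iff this map is antilipschitz, i.e. iff `c ‖y‖ ≤ ‖x + y‖` for some
`c > 0` and all `x ∈ H₁`, `y ∈ H₂`. The infimum of `‖x + y‖` over `x ∈ H₁` is `‖y - P₁ y‖`, and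
`‖y‖² = ‖P₁ y‖² + ‖y - P₁ y‖²`, so this is the same as `‖P₁ y‖ ≤ c' ‖y‖` on `H₂` for some `c' < 1`,
i.e. `‖P₁ P₂‖ < 1`.
-/

/-- The orthogonal projection of a Hilbert space `H` onto a complete (closed) subspace `K`,
viewed as a continuous linear operator `H →L[ℂ] H`. -/
noncomputable def proj {H : Type*} [NormedAddCommGroup H] [InnerProductSpace ℂ H]
    (K : Submodule ℂ H) [CompleteSpace K] : H →L[ℂ] H :=
  K.subtypeL.comp (K.orthogonalProjectionOnto)

namespace Submodule

section NormedSpace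

variable {𝕜 E : Type*} [NontriviallyNormedField 𝕜] [NormedAddCommGroup E] [NormedSpace 𝕜 E]
  (H₁ H₂ : Submodule 𝕜 E)

theorem range_coprod_subtypeL :
    Set.range (H₁.subtypeL.coprod H₂.subtypeL) = ((H₁ ⊔ H₂ : Submodule 𝕜 E) : Set E) := by
  ext v
  simp [mem_sup, eq_comm]

theorem injective_coprod_subtypeL_iff :
    Function.Injective (H₁.subtypeL.coprod H₂.subtypeL) ↔ H₁ ⊓ H₂ = ⊥ := by
  rw [injective_iff_map_eq_zero, eq_bot_iff]
  constructor
  · intro h v ⟨hv₁, hv₂⟩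
    have := h (⟨v, hv₁⟩, -⟨v, hv₂⟩) (by simp)
    simpa using congrArg (fun p ↦ (p.1 : E)) this
  · rintro h ⟨x, y⟩ hxy
    have hx : (x : E) ∈ H₁ ⊓ H₂ := by
      have hx_eq : (x : E) = -y := eq_neg_of_add_eq_zero_left hxy
      exact ⟨x.2, hx_eq ▸ H₂.neg_mem y.2⟩
    have hx0 : (x : E) = 0 := by simpa using h hx
    ext <;> simp_all

theorem inf_eq_bot_and_isClosed_sup_iff [CompleteSpace E] [CompleteSpace H₁] [CompleteSpace H₂] :
    H₁ ⊓ H₂ = ⊥ ∧ IsClosed ((H₁ ⊔ H₂ : Submodule 𝕜 E) : Set E) ↔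
      ∃ K, AntilipschitzWith K (H₁.subtypeL.coprod H₂.subtypeL) := by
  rw [← injective_coprod_subtypeL_iff, ← range_coprod_subtypeL]
  exact ⟨fun ⟨hinj, hcl⟩ ↦
      (ContinuousLinearMap.isClosed_range_iff_antilipschitz_of_injective _ hinj).1 hcl,
    fun ⟨_, hK⟩ ↦ ⟨hK.injective, hK.isClosed_range (ContinuousLinearMap.uniformContinuous _)⟩⟩

theorem exists_antilipschitzWith_coprod_subtypeL_iff :
    (∃ K, AntilipschitzWith K (H₁.subtypeL.coprod H₂.subtypeL)) ↔
      ∃ c > 0, ∀ x ∈ H₁, ∀ y ∈ H₂, c * ‖y‖ ≤ ‖x + y‖ := by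
  rw [antilipschitzWith_iff_exists_mul_le_norm]
  constructor
  · rintro ⟨c, hc, h⟩
    refine ⟨c, hc, fun x hx y hy ↦ ?_⟩
    let p : H₁ × H₂ := (⟨x, hx⟩, ⟨y, hy⟩)
    calc c * ‖y‖ ≤ c * ‖p‖ := by gcongr; exact norm_snd_le p
      _ ≤ ‖x + y‖ := h p
  · rintro ⟨c, hc, h⟩
    refine ⟨c / (1 + c), by positivity, fun ⟨x, y⟩ ↦ ?_⟩
    set s := ‖(x : E) + y‖
    have hy : ‖(y : E)‖ ≤ s / c := by rw [le_div_iff₀ hc, mul_comm]; exact h x x.2 y y.2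
    have hx : ‖(x : E)‖ ≤ s + s / c :=
      calc ‖(x : E)‖ = ‖((x : E) + y) - y‖ := by rw [add_sub_cancel_right]
        _ ≤ s + ‖(y : E)‖ := norm_sub_le _ _
        _ ≤ s + s / c := by gcongr
    calc c / (1 + c) * ‖(x, y)‖ ≤ c / (1 + c) * (s + s / c) := by
          gcongr
          exact norm_prod_le_iff.2 ⟨hx, hy.trans (le_add_of_nonneg_left (norm_nonneg _))⟩
      _ = s := by field_simp; ring
      _ = ‖H₁.subtypeL.coprod H₂.subtypeL (x, y)‖ := rfl

end NormedSpace

section InnerProductSpace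

variable {𝕜 E : Type*} [RCLike 𝕜] [NormedAddCommGroup E] [InnerProductSpace 𝕜 E]

theorem norm_sub_starProjection_le_norm_add (K : Submodule 𝕜 E) [K.HasOrthogonalProjection]
    {x : E} (hx : x ∈ K) (y : E) : ‖y - K.starProjection y‖ ≤ ‖x + y‖ := by
  have : Kᗮ.starProjection (x + y) = y - K.starProjection y := by
    rw [starProjection_orthogonal_val, map_add, starProjection_eq_self_iff.2 hx]
    abel
  exact this ▸ Kᗮ.norm_starProjection_apply_le _

theorem norm_starProjection_le_of_mul_norm_le (K : Submodule 𝕜 E) [K.HasOrthogonalProjection]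
    {c : ℝ} (hc : 0 ≤ c) {y : E} (h : c * ‖y‖ ≤ ‖y - K.starProjection y‖) :
    ‖K.starProjection y‖ ≤ √(1 - c ^ 2) * ‖y‖ := by
  have hpy := norm_sq_eq_add_norm_sq_starProjection y K
  rw [starProjection_orthogonal_val] at hpy
  have : (c * ‖y‖) ^ 2 ≤ ‖y - K.starProjection y‖ ^ 2 := by gcongr
  rw [← Real.sqrt_sq (norm_nonneg (K.starProjection y)), ← Real.sqrt_sq (norm_nonneg y),
    ← Real.sqrt_mul' _ (sq_nonneg _)]
  exact Real.sqrt_le_sqrt (by nlinarith)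

variable (H₁ H₂ : Submodule 𝕜 E) [H₁.HasOrthogonalProjection]

theorem exists_pos_mul_norm_le_norm_add_iff :
    (∃ c > 0, ∀ x ∈ H₁, ∀ y ∈ H₂, c * ‖y‖ ≤ ‖x + y‖) ↔
      ∃ c < 1, ∀ y ∈ H₂, ‖H₁.starProjection y‖ ≤ c * ‖y‖ := by
  constructor
  · rintro ⟨c, hc, h⟩
    refine ⟨√(1 - c ^ 2), ?_, fun y hy ↦ norm_starProjection_le_of_mul_norm_le H₁ hc.le ?_⟩
    · rw [Real.sqrt_lt' one_pos]; nlinarith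
    · simpa [neg_add_eq_sub] using h _ (H₁.neg_mem (H₁.starProjection_apply_mem y)) y hy
  · rintro ⟨c, hc, h⟩
    refine ⟨1 - c, sub_pos.2 hc, fun x hx y hy ↦ ?_⟩
    calc (1 - c) * ‖y‖ ≤ ‖y‖ - ‖H₁.starProjection y‖ := by linarith [h y hy]
      _ ≤ ‖y - H₁.starProjection y‖ := norm_sub_norm_le _ _
      _ ≤ ‖x + y‖ := norm_sub_starProjection_le_norm_add H₁ hx y

variable [H₂.HasOrthogonalProjection]

theorem norm_starProjection_mul_starProjection_lt_one_iff :
    ‖H₁.starProjection * H₂.starProjection‖ < 1 ↔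
      ∃ c < 1, ∀ y ∈ H₂, ‖H₁.starProjection y‖ ≤ c * ‖y‖ := by
  constructor
  · intro h
    refine ⟨_, h, fun y hy ↦ ?_⟩
    simpa [starProjection_eq_self_iff.2 hy] using
      (H₁.starProjection * H₂.starProjection).le_opNorm y
  · rintro ⟨c, hc, h⟩
    have hc₀ : 0 ≤ max c 0 := le_max_right c 0
    refine (ContinuousLinearMap.opNorm_le_bound _ hc₀ fun u ↦ ?_).trans_lt (max_lt hc one_pos)
    calc ‖H₁.starProjection (H₂.starProjection u)‖ ≤ c * ‖H₂.starProjection u‖ :=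
          h _ (H₂.starProjection_apply_mem u)
      _ ≤ max c 0 * ‖H₂.starProjection u‖ := by gcongr; exact le_max_left _ _
      _ ≤ max c 0 * ‖u‖ := by gcongr; exact H₂.norm_starProjection_apply_le u

end InnerProductSpace

end Submodule

theorem proj_eq_starProjection {H : Type*} [NormedAddCommGroup H] [InnerProductSpace ℂ H]
    (K : Submodule ℂ H) [CompleteSpace K] : proj K = K.starProjection :=
  rfl

/-- `H₁ ∩ H₂ = 0` and `H₁ + H₂` closed iff `‖P₁P₂‖ < 1`. -/
theorem stmt5 {H : Type*} [NormedAddCommGroup H] [InnerProductSpace ℂ H] [CompleteSpace H]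
    (H₁ H₂ : Submodule ℂ H) [CompleteSpace H₁] [CompleteSpace H₂] :
    (H₁ ⊓ H₂ = ⊥ ∧ IsClosed ((H₁ ⊔ H₂ : Submodule ℂ H) : Set H)) ↔
      ‖proj H₁ * proj H₂‖ < 1 := by
  rw [Submodule.inf_eq_bot_and_isClosed_sup_iff,
    Submodule.exists_antilipschitzWith_coprod_subtypeL_iff,
    Submodule.exists_pos_mul_norm_le_norm_add_iff, proj_eq_starProjection, proj_eq_starProjection,
    Submodule.norm_starProjection_mul_starProjection_lt_one_iff]
end

section
/- Let H be a complex Hilbert space, H₁, …, Hₙ closed subspaces of H, and P₁, …, Pₙ the orthogonal projections onto them. Then the sum H₁ + … + Hₙ is closed in H if and only if there exists ε > 0 such that the spectrum of P₁ + … + Pₙ does not meet the open interval (0, ε). -/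
open scoped InnerProductSpace
open RCLike

section Hilbert

variable {𝕜 E F : Type*} [RCLike 𝕜] [NormedAddCommGroup E] [InnerProductSpace 𝕜 E]
  [NormedAddCommGroup F] [InnerProductSpace 𝕜 F]

theorem IsSelfAdjoint.isUnit_of_mul_norm_le [CompleteSpace E] {T : E →L[𝕜] E}
    (hT : IsSelfAdjoint T) {δ : ℝ} (hδ : 0 < δ) (h : ∀ x, δ * ‖x‖ ≤ ‖T x‖) : IsUnit T := by
  rw [← isUnit_pow_iff two_ne_zero]
  refine (T ^ 2).isUnit_of_forall_le_norm_inner_map (c := ⟨δ ^ 2, by positivity⟩)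
    (NNReal.coe_pos.mp (pow_pos hδ 2)) fun x => ?_
  have hsq : ⟪(T ^ 2) x, x⟫_𝕜 = ⟪T x, T x⟫_𝕜 := hT.isSymmetric (T x) x
  change ‖x‖ ^ 2 * δ ^ 2 ≤ ‖⟪(T ^ 2) x, x⟫_𝕜‖
  rw [hsq, inner_self_eq_norm_sq_to_K, norm_pow, norm_ofReal, abs_norm, ← mul_pow, mul_comm]
  exact pow_le_pow_left₀ (by positivity) (h x) 2

theorem IsSelfAdjoint.mul_norm_le_norm_sub_smul [CompleteSpace E] {S : E →L[𝕜] E}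
    (hS : IsSelfAdjoint S) (M : Submodule 𝕜 E) [M.HasOrthogonalProjection]
    (hker : ∀ x ∈ Mᗮ, S x = 0) {c : ℝ} (hc : ∀ m ∈ M, c * ‖m‖ ^ 2 ≤ re ⟪S m, m⟫_𝕜) (t : ℝ) (x : E) :
    min t (c - t) * ‖x‖ ≤ ‖S x - (t : 𝕜) • x‖ := by
  -- Test `S x - t x` against the reflection `m - w` of `x = m + w` in `M`.
  set m := M.starProjection x
  set w := x - m
  have hm : m ∈ M := M.starProjection_apply_mem x
  have hw : w ∈ Mᗮ := M.sub_starProjection_mem_orthogonal x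
  have hmw : ⟪m, w⟫_𝕜 = 0 := M.inner_right_of_mem_orthogonal hm hw
  have hwm : ⟪w, m⟫_𝕜 = 0 := M.inner_left_of_mem_orthogonal hm hw
  have hSw : S w = 0 := hker w hw
  have hSmw : ⟪S m, w⟫_𝕜 = 0 := (hS.isSymmetric m w).trans (by simp [hSw])
  have hx : x = m + w := (add_sub_cancel m x).symm
  have hnorm_sq : ‖x‖ * ‖x‖ = ‖m‖ ^ 2 + ‖w‖ ^ 2 := by
    rw [hx, norm_add_sq_eq_norm_sq_add_norm_sq_of_inner_eq_zero m w hmw, sq, sq]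
  have hnorm_sub : ‖m - w‖ = ‖x‖ := by rw [hx, norm_sub_eq_norm_add hwm]
  have hre : re ⟪S x - (t : 𝕜) • x, m - w⟫_𝕜 = re ⟪S m, m⟫_𝕜 - t * ‖m‖ ^ 2 + t * ‖w‖ ^ 2 := by
    rw [hx, map_add, hSw, add_zero]
    simp [inner_sub_left, inner_sub_right, inner_add_left, inner_smul_left, hmw, hwm, hSmw,
      inner_self_eq_norm_sq_to_K]
  have key : min t (c - t) * ‖x‖ * ‖x‖ ≤ ‖S x - (t : 𝕜) • x‖ * ‖x‖ := calc
    min t (c - t) * ‖x‖ * ‖x‖ ≤ (c - t) * ‖m‖ ^ 2 + t * ‖w‖ ^ 2 := by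
      rw [mul_assoc, hnorm_sq, mul_add]
      gcongr
      exacts [min_le_right _ _, min_le_left _ _]
    _ ≤ re ⟪S x - (t : 𝕜) • x, m - w⟫_𝕜 := by rw [hre]; linarith [hc m hm]
    _ ≤ ‖S x - (t : 𝕜) • x‖ * ‖x‖ := hnorm_sub ▸ re_inner_le_norm _ _
  rcases (norm_nonneg x).eq_or_lt with h0 | hpos
  · rw [← h0, mul_zero]
    exact norm_nonneg _
  · exact le_of_mul_le_mul_right key hpos

theorem IsSelfAdjoint.ofReal_notMem_spectrum_of_coercive [CompleteSpace E] {S : E →L[𝕜] E}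
    (hS : IsSelfAdjoint S) (M : Submodule 𝕜 E) [M.HasOrthogonalProjection]
    (hker : ∀ x ∈ Mᗮ, S x = 0) {c : ℝ} (hc : ∀ m ∈ M, c * ‖m‖ ^ 2 ≤ re ⟪S m, m⟫_𝕜) {t : ℝ}
    (ht : t ∈ Set.Ioo 0 c) :
    (t : 𝕜) ∉ spectrum 𝕜 S := by
  rw [spectrum.notMem_iff, IsUnit.sub_iff]
  refine (hS.sub (.algebraMap _ (conj_ofReal t))).isUnit_of_mul_norm_le
    (lt_min ht.1 (sub_pos.2 ht.2)) fun x => ?_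
  simpa [Algebra.algebraMap_eq_smul_one] using hS.mul_norm_le_norm_sub_smul M hker hc t x

theorem Submodule.isClosed_of_mul_self_mul_eq_self {S R : E →L[𝕜] E} (hSR : S * S * R = S)
    (M : Submodule 𝕜 E) (hrange : ∀ x, S x ∈ M) (hker : ∀ x, S x = 0 → x ∈ Mᗮ) :
    IsClosed (M : Set E) := by
  have hperp : ∀ x, x - S (R x) ∈ Mᗮ := fun x => hker _ <| by
    rw [map_sub, sub_eq_zero]
    exact congr($hSR x).symm
  have hfix : (M : Set E) = {x | S (R x) = x} := by
    ext x
    refine ⟨fun hx => ?_, fun hx => hx ▸ hrange (R x)⟩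
    have h0 : x - S (R x) ∈ M ⊓ Mᗮ := ⟨M.sub_mem hx (hrange _), hperp x⟩
    rw [M.inf_orthogonal_eq_bot, Submodule.mem_bot, sub_eq_zero] at h0
    exact h0.symm
  rw [hfix]
  exact isClosed_eq (by fun_prop) continuous_id

theorem ContinuousLinearMap.exists_norm_le_mul_norm_adjoint_of_isClosed_range [CompleteSpace E]
    [CompleteSpace F] (T : E →L[𝕜] F) (hT : IsClosed (Set.range T)) :
    ∃ C > 0, ∀ x, ‖T x‖ ≤ C * ‖T.adjoint (T x)‖ := by
  have hT' : IsClosed (LinearMap.range (T : E →ₗ[𝕜] F) : Set F) := by rwa [LinearMap.coe_range]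
  have := hT'.completeSpace_coe
  obtain ⟨C, hC, hpre⟩ := T.rangeRestrict.exists_preimage_norm_le T.surjective_rangeRestrict
  refine ⟨C, hC, fun x => ?_⟩
  obtain ⟨x', hx', hnorm⟩ := hpre (T.rangeRestrict x)
  have hTx' : T x' = T x := congrArg Subtype.val hx'
  have key : ‖T x‖ * ‖T x‖ ≤ C * ‖T.adjoint (T x)‖ * ‖T x‖ := calc
    ‖T x‖ * ‖T x‖ = re ⟪T x', T x⟫_𝕜 := by rw [hTx', inner_self_eq_norm_mul_norm]
    _ = re ⟪x', T.adjoint (T x)⟫_𝕜 := by rw [adjoint_inner_right]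
    _ ≤ ‖x'‖ * ‖T.adjoint (T x)‖ := re_inner_le_norm _ _
    _ ≤ C * ‖T x‖ * ‖T.adjoint (T x)‖ := by gcongr; exact hnorm
    _ = C * ‖T.adjoint (T x)‖ * ‖T x‖ := by ring
  rcases (norm_nonneg (T x)).eq_or_lt with h0 | hpos
  · rw [← h0]
    positivity
  · exact le_of_mul_le_mul_right key hpos

end Hilbert

theorem IsSelfAdjoint.exists_mul_self_mul_eq_self {A : Type*} [TopologicalSpace A] [Ring A]
    [StarRing A] [Algebra ℝ A] [ContinuousFunctionalCalculus ℝ A IsSelfAdjoint] {a : A}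
    (ha : IsSelfAdjoint a) {ε : ℝ} (hε : 0 < ε) (hgap : ∀ t ∈ spectrum ℝ a, t = 0 ∨ ε ≤ t) :
    ∃ r : A, a * a * r = a := by
  refine ⟨cfc (fun t => (max t ε)⁻¹) a, ?_⟩
  have hcont : Continuous fun t : ℝ => (max t ε)⁻¹ :=
    (continuous_id.max continuous_const).inv₀ fun t => (hε.trans_le (le_max_right t ε)).ne'
  calc a * a * cfc (fun t => (max t ε)⁻¹) a
      = cfc (fun t => t * t * (max t ε)⁻¹) a := by
        rw [cfc_mul _ _ a (by fun_prop) hcont.continuousOn, cfc_mul _ _ a, cfc_id' ℝ a]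
    _ = cfc (fun t => t) a := cfc_congr fun t ht => by
        rcases hgap t ht with rfl | ht
        · simp
        · rw [max_eq_left ht, mul_assoc, mul_inv_cancel₀ (hε.trans_le ht).ne', mul_one]
    _ = a := cfc_id' ℝ a

section Family

variable {𝕜 E ι : Type*} [RCLike 𝕜] [NormedAddCommGroup E] [InnerProductSpace 𝕜 E] [Fintype ι]
  (K : ι → Submodule 𝕜 E)

theorem re_inner_sum_starProjection_apply_self [∀ i, (K i).HasOrthogonalProjection] (x : E) :
    re ⟪(∑ i, (K i).starProjection) x, x⟫_𝕜 = ∑ i, ‖(K i).orthogonalProjectionOnto x‖ ^ 2 := by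
  simp only [sum_apply, sum_inner, map_sum,
    Submodule.re_inner_starProjection_eq_normSq]

theorem sum_starProjection_apply_mem_iSup [∀ i, (K i).HasOrthogonalProjection] (x : E) :
    (∑ i, (K i).starProjection) x ∈ ⨆ i, K i := by
  rw [sum_apply]
  exact Submodule.sum_mem _ fun i _ =>
    Submodule.mem_iSup_of_mem i ((K i).starProjection_apply_mem x)

theorem sum_starProjection_apply_eq_zero_iff [∀ i, (K i).HasOrthogonalProjection] (x : E) :
    (∑ i, (K i).starProjection) x = 0 ↔ x ∈ (⨆ i, K i)ᗮ := by
  rw [← Submodule.iInf_orthogonal, Submodule.mem_iInf]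
  constructor
  · intro h i
    have hsum := re_inner_sum_starProjection_apply_self K x
    rw [h, inner_zero_left, map_zero, eq_comm,
      Finset.sum_eq_zero_iff_of_nonneg fun _ _ => sq_nonneg _] at hsum
    simpa [Submodule.starProjection_apply_eq_zero_iff] using hsum i (Finset.mem_univ i)
  · intro h
    rw [sum_apply]
    exact Finset.sum_eq_zero fun i _ => by
      rw [Submodule.starProjection_apply, Submodule.orthogonalProjectionOnto_eq_zero_iff.2 (h i),
        Submodule.coe_zero]

theorem exists_pos_mul_norm_sq_le_re_inner_sum_starProjection [CompleteSpace E]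
    [∀ i, CompleteSpace (K i)] (hK : IsClosed ((⨆ i, K i : Submodule 𝕜 E) : Set E)) :
    ∃ c > 0, ∀ m ∈ ⨆ i, K i, c * ‖m‖ ^ 2 ≤ re ⟪(∑ i, (K i).starProjection) m, m⟫_𝕜 := by
  let T : PiLp 2 (fun i => K i) →L[𝕜] E := ∑ i, (K i).subtypeL ∘L PiLp.proj 2 (fun i => K i) i
  have hT : ∀ x, T x = ∑ i, (x i : E) := fun x => by simp [T]
  have hrange : Set.range T = ⨆ i, K i := by
    ext m
    constructor
    · rintro ⟨x, rfl⟩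
      rw [hT]
      exact Submodule.sum_mem _ fun i _ => Submodule.mem_iSup_of_mem i (x i).2
    · intro hm
      obtain ⟨μ, hμ⟩ := (Submodule.mem_iSup_finset_iff_exists_sum (s := Finset.univ) K m).mp
        (by simpa using hm)
      exact ⟨WithLp.toLp 2 μ, by rw [hT, ← hμ]⟩
  have hadj : ∀ m, T.adjoint m = WithLp.toLp 2 fun i => (K i).orthogonalProjectionOnto m :=
    fun m => ext_inner_left 𝕜 fun x => by
      simp [ContinuousLinearMap.adjoint_inner_right, hT, sum_inner, PiLp.inner_apply]
  obtain ⟨C, hC, hTC⟩ := T.exists_norm_le_mul_norm_adjoint_of_isClosed_range (hrange ▸ hK)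
  refine ⟨(C ^ 2)⁻¹, by positivity, fun m hm => ?_⟩
  obtain ⟨x, rfl⟩ : m ∈ Set.range T := hrange ▸ hm
  have hnorm : ‖T.adjoint (T x)‖ ^ 2 = ∑ i, ‖(K i).orthogonalProjectionOnto (T x)‖ ^ 2 := by
    rw [hadj, PiLp.norm_sq_eq_of_L2]
  rw [re_inner_sum_starProjection_apply_self, ← hnorm, inv_mul_le_iff₀ (by positivity), ← mul_pow]
  exact pow_le_pow_left₀ (norm_nonneg _) (hTC x) 2

end Family

/-- `H₁ + … + Hₙ` is closed iff there is `ε > 0` such that the spectrum of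
`P₁ + … + Pₙ` does not meet the interval `(0, ε)`. -/
theorem stmt8 {H : Type*} [NormedAddCommGroup H] [InnerProductSpace ℂ H] [CompleteSpace H]
    {n : ℕ} (H_ : Fin n → Submodule ℂ H) [∀ i, CompleteSpace (H_ i)] :
    IsClosed ((⨆ i, H_ i : Submodule ℂ H) : Set H) ↔
      ∃ ε > (0 : ℝ), ∀ t : ℝ, t ∈ Set.Ioo (0 : ℝ) ε →
        (t : ℂ) ∉ spectrum ℂ (∑ i, proj (H_ i)) := by
  set S : H →L[ℂ] H := ∑ i, (H_ i).starProjection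
  have hS : 0 ≤ S := Finset.sum_nonneg fun i _ => isStarProjection_starProjection.nonneg
  have hker : ∀ x, S x = 0 ↔ x ∈ (⨆ i, H_ i)ᗮ := sum_starProjection_apply_eq_zero_iff H_
  constructor
  · intro hM
    have : CompleteSpace (⨆ i, H_ i : Submodule ℂ H) := hM.completeSpace_coe
    obtain ⟨c, hc, hcoer⟩ := exists_pos_mul_norm_sq_le_re_inner_sum_starProjection H_ hM
    exact ⟨c, hc, fun t ht =>
      hS.isSelfAdjoint.ofReal_notMem_spectrum_of_coercive _ (fun x => (hker x).2) hcoer ht⟩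
  · rintro ⟨ε, hε, hgap⟩
    obtain ⟨r, hr⟩ := hS.isSelfAdjoint.exists_mul_self_mul_eq_self hε fun t ht => by
      by_contra! h
      exact hgap t ⟨(spectrum_nonneg_of_nonneg hS ht).lt_of_ne' h.1, h.2⟩
        (hS.isSelfAdjoint.coe_mem_spectrum_complex.2 ht)
    exact Submodule.isClosed_of_mul_self_mul_eq_self hr _ (sum_starProjection_apply_mem_iSup H_)
      fun x => (hker x).1
end
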